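/- Let S ⊆ ℝ² be a bounded measurable set whose topological frontier is the image of a continuous closed curve of length L with L > 1. Then the number of pairs (i,j) ∈ ℤ² such that the open square (i,i+1) × (j,j+1) is contained in S and disjoint from the frontier of S is at least area(S) − 4·L, where area denotes two-dimensional Lebesgue measure. -/

import Mathlib

open MeasureTheory

/-- The open unit grid square with lower-left corner `(i, j)`. -/
def openGridSquare (i j : ℤ) : Set (EuclideanSpace ℝ (Fin 2)) :=
  {p | p 0 ∈ Set.Ioo (i : ℝ) (i + 1) ∧ p 1 ∈ Set.Ioo (j : ℝ) (j + 1)}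

/-!
Almost every point of the plane lies in an open grid square, and a square that meets `S` but not
its frontier lies inside `S` by connectedness. Hence `area(S)` is at most the number of inner
precincts plus the number of squares meeting the frontier.

A closed curve of length `L` meets at most `max 4 (4L)` squares. List cells visited at distinct
times in cyclic order. Among five consecutive ones, two have indices of equal parity in both
coordinates, so they are two apart in one coordinate and the curve travels a distance greater
than `1` within four consecutive steps. Summing over all cyclic windows of four steps counts the
length four times.
-/

open Set
open scoped ENNReal

theorem IsPreconnected.subset_or_disjoint_of_disjoint_frontier {X : Type*} [TopologicalSpace X]
    {Q S : Set X} (hQ : IsPreconnected Q) (h : Disjoint Q (frontier S)) :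
    Q ⊆ S ∨ Disjoint Q S := by
  have hcover : Q ⊆ interior S ∪ (closure S)ᶜ := fun p hp => by
    by_cases hc : p ∈ closure S
    · exact Or.inl (by_contra fun hi => h.notMem_of_mem_left hp ⟨hc, hi⟩)
    · exact Or.inr hc
  refine (hQ.subset_or_subset isOpen_interior isClosed_closure.isOpen_compl
    (disjoint_compl_right.mono_left interior_subset_closure) hcover).imp
      (fun h => h.trans interior_subset) fun h => ?_
  exact (disjoint_compl_left.mono_left h).mono_right subset_closure

theorem EuclideanSpace.volume_setOf_forall_apply_mem {ι : Type*} [Fintype ι] (s : ι → Set ℝ) :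
    volume {p : EuclideanSpace ℝ ι | ∀ k, p k ∈ s k} = ∏ k, volume (s k) := by
  have : {p : EuclideanSpace ℝ ι | ∀ k, p k ∈ s k} =
      (MeasurableEquiv.toLp 2 (ι → ℝ)).symm ⁻¹' univ.pi s := by
    ext p; simp [MeasurableEquiv.coe_toLp_symm]
  rw [this, (EuclideanSpace.volume_preserving_symm_measurableEquiv_toLp ι).measure_preimage_equiv,
    volume_pi_pi]

theorem EuclideanSpace.ae_apply_ne {ι : Type*} [Fintype ι] (k : ι) (c : ℝ) :
    ∀ᵐ p : EuclideanSpace ℝ ι, p k ≠ c := by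
  classical
  have h := volume_setOf_forall_apply_mem (Function.update (fun _ => univ) k {c})
  rw [Finset.prod_eq_zero (Finset.mem_univ k) (by simp)] at h
  refine measure_mono_null (fun p hp => ?_) h
  intro i
  rcases eq_or_ne i k with rfl | hi
  · simpa using hp
  · simp [hi]

theorem encard_le_of_forall_finset_card_le {α : Type*} {s : Set α} {B : ℝ≥0∞}
    (h : ∀ F : Finset α, ↑F ⊆ s → (F.card : ℝ≥0∞) ≤ B) : (s.encard : ℝ≥0∞) ≤ B := by
  rcases s.finite_or_infinite with hs | hs
  · simpa [hs.encard_eq_coe_toFinset_card] using h hs.toFinset (by simp)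
  · suffices B = ⊤ by simp [this]
    refine ENNReal.eq_top_of_forall_nnreal_le fun r => ?_
    obtain ⟨F, hFs, hF⟩ := hs.exists_subset_card_eq ⌈r⌉₊
    calc (r : ℝ≥0∞) ≤ (⌈r⌉₊ : ℝ≥0∞) := by exact_mod_cast Nat.le_ceil r
      _ ≤ B := hF ▸ h F hFs

open Fin.NatCast in
theorem card_le_mul_sum_edist_of_forall_window {E : Type*} [PseudoEMetricSpace E] {N : ℕ}
    [NeZero N] (x : Fin N → E) (k : ℕ)
    (hx : ∀ m : Fin N, ∃ a ≤ k, ∃ b ≤ k, 1 ≤ edist (x (m + (a : Fin N))) (x (m + (b : Fin N)))) :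
    (N : ℝ≥0∞) ≤ k * ∑ m, edist (x m) (x (m + 1)) := by
  have hwindow : ∀ m : Fin N,
      1 ≤ ∑ j ∈ Finset.range k, edist (x (m + (j : Fin N))) (x (m + (j : Fin N) + 1)) := by
    intro m
    obtain ⟨a, ha, b, hb, h⟩ := hx m
    wlog hab : a ≤ b generalizing a b
    · exact this b hb a ha (by rwa [edist_comm]) (le_of_not_ge hab)
    calc 1 ≤ edist (x (m + (a : Fin N))) (x (m + (b : Fin N))) := h
      _ ≤ ∑ j ∈ Finset.Ico a b, edist (x (m + (j : Fin N))) (x (m + (j : Fin N) + 1)) := by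
          simpa only [Nat.cast_succ, add_assoc] using
            edist_le_Ico_sum_edist (fun j : ℕ => x (m + (j : Fin N))) hab
      _ ≤ ∑ j ∈ Finset.range k, edist (x (m + (j : Fin N))) (x (m + (j : Fin N) + 1)) :=
          Finset.sum_le_sum_of_subset fun j hj => by
            simp only [Finset.mem_Ico, Finset.mem_range] at hj ⊢; omega
  calc (N : ℝ≥0∞) = ∑ _m : Fin N, 1 := by simp
    _ ≤ ∑ m, ∑ j ∈ Finset.range k, edist (x (m + (j : Fin N))) (x (m + (j : Fin N) + 1)) :=
        Finset.sum_le_sum fun m _ => hwindow m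
    _ = ∑ _j ∈ Finset.range k, ∑ m, edist (x m) (x (m + 1)) := by
        rw [Finset.sum_comm]
        refine Finset.sum_congr rfl fun j _ => ?_
        exact Fintype.sum_equiv (Equiv.addRight (j : Fin N)) _ _ fun m => rfl
    _ = k * ∑ m, edist (x m) (x (m + 1)) := by simp

theorem sum_edist_cyclic_le_eVariationOn {α E : Type*} [LinearOrder α] [PseudoEMetricSpace E]
    {f : α → E} {a b : α} (hf : f a = f b) {n : ℕ} {τ : Fin (n + 1) → α} (hτ : Monotone τ)
    (hτab : ∀ i, τ i ∈ Icc a b) :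
    ∑ i, edist (f (τ i)) (f (τ (i + 1))) ≤ eVariationOn f (Icc a b) := by
  have hab : a ≤ b := (hτab 0).1.trans (hτab 0).2
  -- the subdivision `a ≤ τ 0 ≤ ⋯ ≤ τ n ≤ b`, extended constantly
  let u : ℕ → α := fun i => if i = 0 then a else if h : i - 1 < n + 1 then τ ⟨i - 1, h⟩ else b
  have hu : Monotone u := by
    intro i j hij
    simp only [u]
    split_ifs <;> first
      | exact le_rfl | exact (hτab _).1 | exact (hτab _).2 | exact hab
      | exact hτ (Fin.mk_le_mk.2 (by omega)) | omega
  have huτ : ∀ i : Fin (n + 1), u (i + 1) = τ i := fun i => by simp [u, not_lt.2 (Fin.is_le i)]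
  have hmem : ∀ i, u i ∈ Icc a b := fun i => by
    simp only [u]; split_ifs
    exacts [left_mem_Icc.2 hab, hτab _, right_mem_Icc.2 hab]
  have hlast : edist (f (τ (Fin.last n))) (f (τ 0))
      ≤ edist (f (u (n + 2))) (f (u (n + 1))) + edist (f (u 1)) (f (u 0)) := by
    have hb : u (n + 2) = b := by simp [u]
    rw [hb, show u 0 = a from rfl, show u 1 = τ 0 from huτ 0,
      show u (n + 1) = τ (Fin.last n) from huτ (Fin.last n), edist_comm (f b),
      edist_comm (f (τ 0)), ← hf]
    exact edist_triangle _ _ _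
  calc ∑ i, edist (f (τ i)) (f (τ (i + 1)))
      = ∑ i ∈ Finset.range n, edist (f (u (i + 1 + 1))) (f (u (i + 1)))
          + edist (f (τ (Fin.last n))) (f (τ 0)) := by
        rw [Fin.sum_univ_castSucc, Fin.last_add_one,
          ← Fin.sum_univ_eq_sum_range (fun i => edist (f (u (i + 1 + 1))) (f (u (i + 1))))]
        congr 1
        refine Finset.sum_congr rfl fun i _ => ?_
        rw [edist_comm, Fin.coeSucc_eq_succ, ← huτ, ← huτ]
        simp
    _ ≤ ∑ i ∈ Finset.range n, edist (f (u (i + 1 + 1))) (f (u (i + 1)))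
          + (edist (f (u (n + 2))) (f (u (n + 1))) + edist (f (u 1)) (f (u 0))) := by gcongr
    _ = ∑ i ∈ Finset.range (n + 2), edist (f (u (i + 1))) (f (u i)) := by
        rw [Finset.sum_range_succ, Finset.sum_range_succ']
        ring
    _ ≤ eVariationOn f (Icc a b) := eVariationOn.sum_le hu hmem

theorem volume_openGridSquare (i j : ℤ) : volume (openGridSquare i j) = 1 := by
  have : openGridSquare i j = {p | ∀ k, p k ∈ ![Ioo (i : ℝ) (i + 1), Ioo (j : ℝ) (j + 1)] k} := by
    ext p; simp [openGridSquare, Fin.forall_fin_two]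
  rw [this, EuclideanSpace.volume_setOf_forall_apply_mem]
  simp [Fin.prod_univ_two]

theorem isPreconnected_openGridSquare (i j : ℤ) : IsPreconnected (openGridSquare i j) :=
  ((convex_Ioo _ _).linear_preimage (EuclideanSpace.projₗ (0 : Fin 2))).inter
    ((convex_Ioo _ _).linear_preimage (EuclideanSpace.projₗ (1 : Fin 2))) |>.isPreconnected

theorem ae_mem_iUnion_openGridSquare :
    ∀ᵐ p : EuclideanSpace ℝ (Fin 2), p ∈ ⋃ ij : ℤ × ℤ, openGridSquare ij.1 ij.2 := by
  have h : ∀ᵐ p : EuclideanSpace ℝ (Fin 2), ∀ n : ℤ, p 0 ≠ n ∧ p 1 ≠ n :=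
    ae_all_iff.2 fun n => (EuclideanSpace.ae_apply_ne 0 n).and (EuclideanSpace.ae_apply_ne 1 n)
  filter_upwards [h] with p hp
  exact mem_iUnion.2 ⟨(⌊p 0⌋, ⌊p 1⌋),
    ⟨(Int.floor_le _).lt_of_ne (hp _).1.symm, Int.lt_floor_add_one _⟩,
    ⟨(Int.floor_le _).lt_of_ne (hp _).2.symm, Int.lt_floor_add_one _⟩⟩

theorem volume_le_tsum_volume_inter_openGridSquare (S : Set (EuclideanSpace ℝ (Fin 2))) :
    volume S ≤ ∑' ij : ℤ × ℤ, volume (S ∩ openGridSquare ij.1 ij.2) := by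
  calc volume S ≤ volume (⋃ ij : ℤ × ℤ, S ∩ openGridSquare ij.1 ij.2) := by
        refine measure_mono_ae ?_
        filter_upwards [ae_mem_iUnion_openGridSquare] with p hp hpS
        obtain ⟨ij, hij⟩ := mem_iUnion.1 hp
        exact mem_iUnion.2 ⟨ij, hpS, hij⟩
    _ ≤ _ := measure_iUnion_le _

theorem volume_le_encard_inner_add_encard_meeting_frontier (S : Set (EuclideanSpace ℝ (Fin 2))) :
    volume S ≤ ({ij : ℤ × ℤ | openGridSquare ij.1 ij.2 ⊆ S ∧
        Disjoint (openGridSquare ij.1 ij.2) (frontier S)}.encard : ℝ≥0∞) +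
      {ij : ℤ × ℤ | (openGridSquare ij.1 ij.2 ∩ frontier S).Nonempty}.encard := by
  set I := {ij : ℤ × ℤ | openGridSquare ij.1 ij.2 ⊆ S ∧
    Disjoint (openGridSquare ij.1 ij.2) (frontier S)}
  set M := {ij : ℤ × ℤ | (openGridSquare ij.1 ij.2 ∩ frontier S).Nonempty}
  have hsquare : ∀ ij : ℤ × ℤ,
      volume (S ∩ openGridSquare ij.1 ij.2) ≤ (I ∪ M).indicator (fun _ => 1) ij := by
    intro ij
    by_cases hij : ij ∈ I ∪ M
    · rw [indicator_of_mem hij, ← volume_openGridSquare ij.1 ij.2]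
      exact measure_mono inter_subset_right
    · have hdisj : Disjoint (openGridSquare ij.1 ij.2) (frontier S) :=
        disjoint_iff_inter_eq_empty.2 (not_nonempty_iff_eq_empty.1 fun h => hij (Or.inr h))
      rcases (isPreconnected_openGridSquare _ _).subset_or_disjoint_of_disjoint_frontier hdisj
        with hsub | hS
      · exact absurd (Or.inl ⟨hsub, hdisj⟩) hij
      · simp [hS.symm.inter_eq]
  calc volume S ≤ ∑' ij : ℤ × ℤ, volume (S ∩ openGridSquare ij.1 ij.2) :=
        volume_le_tsum_volume_inter_openGridSquare S
    _ ≤ ∑' ij, (I ∪ M).indicator (fun _ => 1) ij := ENNReal.tsum_le_tsum hsquare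
    _ = (I ∪ M).encard := by
        rw [← tsum_subtype, ENNReal.tsum_const, mul_one]
        rfl
    _ ≤ I.encard + M.encard := by exact_mod_cast encard_union_le I M

noncomputable def gridIndex (p : EuclideanSpace ℝ (Fin 2)) : ℤ × ℤ := (⌊p 0⌋, ⌊p 1⌋)

theorem gridIndex_eq_of_mem_openGridSquare {p : EuclideanSpace ℝ (Fin 2)} {i j : ℤ}
    (hp : p ∈ openGridSquare i j) : gridIndex p = (i, j) :=
  Prod.ext (Int.floor_eq_iff.2 ⟨hp.1.1.le, hp.1.2⟩) (Int.floor_eq_iff.2 ⟨hp.2.1.le, hp.2.2⟩)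

theorem one_lt_abs_sub_of_floor_ne_of_two_dvd {x y : ℝ} (hne : ⌊x⌋ ≠ ⌊y⌋)
    (h2 : (2 : ℤ) ∣ ⌊y⌋ - ⌊x⌋) : 1 < |x - y| := by
  have hx := Int.floor_le x
  have hx' := Int.lt_floor_add_one x
  have hy := Int.floor_le y
  have hy' := Int.lt_floor_add_one y
  rcases (by omega : ⌊x⌋ + 2 ≤ ⌊y⌋ ∨ ⌊y⌋ + 2 ≤ ⌊x⌋) with h | h
  · have h : (⌊x⌋ : ℝ) + 2 ≤ ⌊y⌋ := by exact_mod_cast h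
    exact lt_abs.2 (Or.inr (by linarith))
  · have h : (⌊y⌋ : ℝ) + 2 ≤ ⌊x⌋ := by exact_mod_cast h
    exact lt_abs.2 (Or.inl (by linarith))

theorem exists_one_lt_dist_of_injective_gridIndex (q : Fin 5 → EuclideanSpace ℝ (Fin 2))
    (hq : Function.Injective (gridIndex ∘ q)) : ∃ a b, 1 < dist (q a) (q b) := by
  let parity : ℤ × ℤ → ZMod 2 × ZMod 2 := fun ij => (ij.1, ij.2)
  obtain ⟨a, b, hab, hpar⟩ :=
    Fintype.exists_ne_map_eq_of_card_lt (parity ∘ gridIndex ∘ q) (by simp)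
  simp only [Function.comp_apply, parity, gridIndex, Prod.ext_iff,
    ZMod.intCast_eq_intCast_iff_dvd_sub, Nat.cast_ofNat] at hpar
  have hne : ¬ (⌊q a 0⌋ = ⌊q b 0⌋ ∧ ⌊q a 1⌋ = ⌊q b 1⌋) := fun h =>
    hab (hq (Prod.ext h.1 h.2))
  refine ⟨a, b, ?_⟩
  rcases not_and_or.1 hne with h | h
  · exact (one_lt_abs_sub_of_floor_ne_of_two_dvd h hpar.1).trans_le
      ((Real.dist_eq _ _).symm.le.trans (PiLp.dist_apply_le _ _ 0))
  · exact (one_lt_abs_sub_of_floor_ne_of_two_dvd h hpar.2).trans_le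
      ((Real.dist_eq _ _).symm.le.trans (PiLp.dist_apply_le _ _ 1))

open Fin.NatCast in
theorem card_le_four_mul_eVariationOn {γ : ℝ → EuclideanSpace ℝ (Fin 2)} {a b : ℝ}
    (hγ : γ a = γ b) {T : Finset ℝ} (hTab : ↑T ⊆ Icc a b) (hinj : InjOn (gridIndex ∘ γ) T)
    (hT : 5 ≤ T.card) :
    (T.card : ℝ≥0∞) ≤ 4 * eVariationOn γ (Icc a b) := by
  obtain ⟨n, hn⟩ : ∃ n, T.card = n + 1 := ⟨T.card - 1, by omega⟩
  set τ := T.orderEmbOfFin hn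
  have hwindow : ∀ m : Fin (n + 1), ∃ i ≤ (4 : ℕ), ∃ j ≤ (4 : ℕ),
      1 ≤ edist (γ (τ (m + (i : Fin (n + 1))))) (γ (τ (m + (j : Fin (n + 1))))) := by
    intro m
    have hinj5 : Function.Injective
        (gridIndex ∘ fun i : Fin 5 => γ (τ (m + ((i : ℕ) : Fin (n + 1))))) := by
      intro i j hij
      have hτ := congrArg Fin.val <| add_left_cancel <| τ.injective <|
        hinj (T.orderEmbOfFin_mem hn _) (T.orderEmbOfFin_mem hn _) hij
      rw [Fin.val_cast_of_lt (by omega), Fin.val_cast_of_lt (by omega)] at hτ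
      exact Fin.ext hτ
    obtain ⟨i, j, hij⟩ := exists_one_lt_dist_of_injective_gridIndex _ hinj5
    exact ⟨i, by omega, j, by omega, by rw [edist_dist]; exact ENNReal.one_le_ofReal.2 hij.le⟩
  calc (T.card : ℝ≥0∞) = (n + 1 : ℕ) := by rw [hn]
    _ ≤ (4 : ℕ) * ∑ m, edist (γ (τ m)) (γ (τ (m + 1))) :=
        card_le_mul_sum_edist_of_forall_window (fun m => γ (τ m)) 4 hwindow
    _ ≤ 4 * eVariationOn γ (Icc a b) := by
        push_cast
        gcongr
        exact sum_edist_cyclic_le_eVariationOn hγ τ.monotone fun i =>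
          hTab (T.orderEmbOfFin_mem hn i)

theorem setOf_openGridSquare_inter_nonempty_subset_image_gridIndex
    (C : Set (EuclideanSpace ℝ (Fin 2))) :
    {ij : ℤ × ℤ | (openGridSquare ij.1 ij.2 ∩ C).Nonempty} ⊆ gridIndex '' C := by
  rintro ij ⟨p, hpQ, hpC⟩
  exact ⟨p, hpC, gridIndex_eq_of_mem_openGridSquare hpQ⟩

theorem encard_image_gridIndex_comp_le {γ : ℝ → EuclideanSpace ℝ (Fin 2)} {a b : ℝ}
    (hγ : γ a = γ b) :
    (((gridIndex ∘ γ) '' Icc a b).encard : ℝ≥0∞) ≤ max 4 (4 * eVariationOn γ (Icc a b)) := by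
  obtain ⟨T, hT, hbij⟩ := exists_subset_bijOn (Icc a b) (gridIndex ∘ γ)
  rw [← hbij.image_eq, hbij.injOn.encard_image]
  refine encard_le_of_forall_finset_card_le fun F hF => ?_
  rcases le_or_gt F.card 4 with h | h
  · exact le_max_of_le_left (by exact_mod_cast h)
  · exact le_max_of_le_right
      (card_le_four_mul_eVariationOn hγ (hF.trans hT) (hbij.injOn.mono hF) h)

theorem card_inner_precincts_ge_general (S : Set (EuclideanSpace ℝ (Fin 2)))
    (γ : ℝ → EuclideanSpace ℝ (Fin 2)) (L : ℝ)
    (hclosed : γ 0 = γ 1)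
    (hfront : frontier S = γ '' Set.Icc 0 1)
    (hlen : eVariationOn γ (Set.Icc 0 1) = ENNReal.ofReal L) (hL : 1 < L) :
    ENNReal.ofReal ((volume S).toReal - 4 * L)
      ≤ {ij : ℤ × ℤ | openGridSquare ij.1 ij.2 ⊆ S ∧
          Disjoint (openGridSquare ij.1 ij.2) (frontier S)}.encard := by
  have hmeet : ({ij : ℤ × ℤ | (openGridSquare ij.1 ij.2 ∩ frontier S).Nonempty}.encard : ℝ≥0∞)
      ≤ ENNReal.ofReal (4 * L) := by
    calc _ ≤ (((gridIndex ∘ γ) '' Icc 0 1).encard : ℝ≥0∞) := by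
          rw [image_comp, ← hfront]
          exact ENat.toENNReal_le.2 (encard_le_encard
            (setOf_openGridSquare_inter_nonempty_subset_image_gridIndex _))
      _ ≤ max 4 (4 * eVariationOn γ (Icc 0 1)) := encard_image_gridIndex_comp_le hclosed
      _ = ENNReal.ofReal (4 * L) := by
          have h1 : (1 : ℝ≥0∞) ≤ ENNReal.ofReal L := ENNReal.one_le_ofReal.2 hL.le
          rw [hlen, max_eq_right (by simpa using mul_le_mul_right h1 (4 : ℝ≥0∞)),
            ENNReal.ofReal_mul (by norm_num), ENNReal.ofReal_ofNat]
  calc ENNReal.ofReal ((volume S).toReal - 4 * L)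
      ≤ volume S - ENNReal.ofReal (4 * L) := by
        rw [ENNReal.ofReal_sub _ (by positivity)]
        exact tsub_le_tsub_right ENNReal.ofReal_toReal_le _
    _ ≤ _ := tsub_le_iff_right.2
        ((volume_le_encard_inner_add_encard_meeting_frontier S).trans (by gcongr))

/-- If `S ⊆ ℝ²` is a bounded measurable set whose frontier is the image of a continuous closed
curve of length `L > 1`, then at least `area(S) − 4·L` of the open unit grid squares are
contained in `S` and disjoint from the frontier of `S` (inner precincts). -/
theorem card_inner_precincts_ge (S : Set (EuclideanSpace ℝ (Fin 2)))
    (hSmeas : MeasurableSet S) (hSbdd : Bornology.IsBounded S)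
    (γ : ℝ → EuclideanSpace ℝ (Fin 2)) (L : ℝ)
    (hcont : ContinuousOn γ (Set.Icc 0 1)) (hclosed : γ 0 = γ 1)
    (hfront : frontier S = γ '' Set.Icc 0 1)
    (hlen : eVariationOn γ (Set.Icc 0 1) = ENNReal.ofReal L) (hL : 1 < L) :
    ENNReal.ofReal ((volume S).toReal - 4 * L)
      ≤ {ij : ℤ × ℤ | openGridSquare ij.1 ij.2 ⊆ S ∧
          Disjoint (openGridSquare ij.1 ij.2) (frontier S)}.encard :=
  card_inner_precincts_ge_general S γ L hclosed hfront hlen hL
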